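/- arXiv:2308.04629 — 4 statements merged into one kernel-verified Lean document; each statement's English description precedes it below -/
import Mathlib

section
/- Suppose r ≥ 0, δt·r ≤ 2, and for every interior index i = 1,…,u−1 both |r − q|·δS ≤ σ²·S_i and δt(r + σ²S_i²/δS²) ≤ 1 hold, and additionally the ghost-point condition δt(r + σ²S_{u−1}²/δS² + (σ²S_{u−1}²/(2δS²) + (r−q)S_{u−1}/(2δS))·θ) ≤ 1 holds. Then every row of the (u+1)×(u+1) matrix B = I + Ã of the explicit Euler scheme with ghost-point boundary has absolute row sum at most 1: Σ_j |B_{ij}| ≤ 1 for all i; equivalently ‖I + Ã‖_∞ ≤ 1, so the explicit step is nonexpansive in the sup norm. -/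
/-- Under the stated conditions (nonnegative rate, `δt·r ≤ 2`,
nonnegative off-diagonal coefficients and the standard explicit stability
condition at interior indices, plus the ghost-point condition at the
barrier-adjacent row), every row of the explicit Euler scheme matrix
`B = I + Ã` with ghost-point boundary has absolute row sum at most `1`,
i.e. `‖I + Ã‖_∞ ≤ 1`. -/
theorem ghost_point_matrix_sup_norm_le_one
    (δt δS σ r q Lp θ : ℝ) (u : ℕ)
    (hδt : 0 < δt) (hδS : 0 < δS) (hσ : 0 < σ) (hu : 2 ≤ u)
    (S : ℕ → ℝ) (hS : ∀ i, S i = (i : ℝ) * δS)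
    (hL₁ : S (u - 1) < Lp) (hL₂ : Lp ≤ S u)
    (hθ : θ = (S u - Lp) / (Lp - S (u - 1)))
    (a b c : ℕ → ℝ)
    (ha : ∀ i, a i = δt * (σ ^ 2 * (S i) ^ 2 / (2 * δS ^ 2) - (r - q) * S i / (2 * δS)))
    (hb : ∀ i, b i = -(δt * (r + σ ^ 2 * (S i) ^ 2 / δS ^ 2)))
    (hc : ∀ i, c i = δt * (σ ^ 2 * (S i) ^ 2 / (2 * δS ^ 2) + (r - q) * S i / (2 * δS)))
    (B : Matrix (Fin (u + 1)) (Fin (u + 1)) ℝ)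
    (hB : ∀ i j : Fin (u + 1),
      B i j =
        if i.val = 0 then (if j = i then 1 - δt * r else 0)
        else if i.val = u then (if j = i then 1 else 0)
        else if i.val = u - 1 then
          (if j.val + 1 = i.val then a (u - 1)
           else if j = i then 1 + b (u - 1) - c (u - 1) * θ
           else 0)
        else
          (if j.val + 1 = i.val then a i.val
           else if j = i then 1 + b i.val
           else if j.val = i.val + 1 then c i.val
           else 0))
    (hr : 0 ≤ r) (hrδt : δt * r ≤ 2)
    (hint : ∀ i : ℕ, 1 ≤ i → i ≤ u - 1 →
      |r - q| * δS ≤ σ ^ 2 * S i ∧ δt * (r + σ ^ 2 * (S i) ^ 2 / δS ^ 2) ≤ 1)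
    (hghost : δt * (r + σ ^ 2 * (S (u - 1)) ^ 2 / δS ^ 2
        + (σ ^ 2 * (S (u - 1)) ^ 2 / (2 * δS ^ 2)
           + (r - q) * S (u - 1) / (2 * δS)) * θ) ≤ 1) :
    ∀ i : Fin (u + 1), ∑ j, |B i j| ≤ 1 := by
  have hδS' : (δS:ℝ) ≠ 0 := ne_of_gt hδS
  have habc : ∀ k : ℕ, a k + b k + c k = -(δt * r) := by
    intro k; rw [ha, hb, hc]; field_simp; ring
  have hSpos : ∀ k : ℕ, 1 ≤ k → 0 < S k := by
    intro k hk
    rw [hS]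
    have h1 : (1:ℝ) ≤ (k:ℝ) := by exact_mod_cast hk
    nlinarith
  have hcoef : ∀ k : ℕ, 1 ≤ k → k ≤ u - 1 → 0 ≤ a k ∧ 0 ≤ c k := by
    intro k hk1 hk2
    obtain ⟨h1, _⟩ := hint k hk1 hk2
    have hSk := hSpos k hk1
    have hq : (r - q) * δS ≤ σ ^ 2 * S k :=
      le_trans (mul_le_mul_of_nonneg_right (le_abs_self _) hδS.le) h1
    have hq' : (-(r - q)) * δS ≤ σ ^ 2 * S k :=
      le_trans (mul_le_mul_of_nonneg_right (neg_le_abs _) hδS.le) h1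
    constructor
    · rw [ha]
      apply mul_nonneg hδt.le
      rw [sub_nonneg, div_le_div_iff₀ (by positivity) (by positivity)]
      nlinarith [mul_le_mul_of_nonneg_left hq (by nlinarith : (0:ℝ) ≤ 2 * δS * S k)]
    · rw [hc]
      apply mul_nonneg hδt.le
      have key : (-(r - q)) * S k / (2 * δS) ≤ σ ^ 2 * S k ^ 2 / (2 * δS ^ 2) := by
        rw [div_le_div_iff₀ (by positivity) (by positivity)]
        nlinarith [mul_le_mul_of_nonneg_left hq' (by nlinarith : (0:ℝ) ≤ 2 * δS * S k)]
      have : (-(r - q)) * S k / (2 * δS) = -((r - q) * S k / (2 * δS)) := by ring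
      linarith [key, this ▸ key]
  have hθ0 : 0 ≤ θ := by
    rw [hθ]; apply div_nonneg <;> linarith
  have hδtr : 0 ≤ δt * r := mul_nonneg hδt.le hr
  intro i
  by_cases h0 : i.val = 0
  · have hrow : ∀ j, |B i j| = if j = i then |1 - δt * r| else 0 := by
      intro j; rw [hB, if_pos h0]; split_ifs <;> simp
    calc ∑ j, |B i j| = ∑ j, (if j = i then |1 - δt * r| else 0) :=
          Finset.sum_congr rfl fun j _ => hrow j
      _ = |1 - δt * r| := by rw [Finset.sum_ite_eq']; simp
      _ ≤ 1 := by rw [abs_le]; constructor <;> linarith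
  · by_cases hu' : i.val = u
    · have hrow : ∀ j, |B i j| = if j = i then (1:ℝ) else 0 := by
        intro j; rw [hB, if_neg h0, if_pos hu']; split_ifs <;> simp
      calc ∑ j, |B i j| = ∑ j, (if j = i then (1:ℝ) else 0) :=
            Finset.sum_congr rfl fun j _ => hrow j
        _ = 1 := by rw [Finset.sum_ite_eq']; simp
        _ ≤ 1 := le_refl 1
    · by_cases h1 : i.val = u - 1
      · -- ghost row
        obtain ⟨ha0, hc0⟩ := hcoef (u - 1) (by omega) (le_refl _)
        have hnn : 0 ≤ 1 + b (u - 1) - c (u - 1) * θ := by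
          have heq : 1 + b (u - 1) - c (u - 1) * θ
              = 1 - δt * (r + σ ^ 2 * (S (u - 1)) ^ 2 / δS ^ 2
                + (σ ^ 2 * (S (u - 1)) ^ 2 / (2 * δS ^ 2)
                   + (r - q) * S (u - 1) / (2 * δS)) * θ) := by
            rw [hb, hc]; ring
          rw [heq]; linarith [hghost]
        let p1 : Fin (u + 1) := ⟨u - 2, by omega⟩
        have hp1v : p1.val = u - 2 := rfl
        have hrow : ∀ j, |B i j| =
            (if j = p1 then |a (u - 1)| else 0)
            + (if j = i then |1 + b (u - 1) - c (u - 1) * θ| else 0) := by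
          intro j
          rw [hB, if_neg h0, if_neg hu', if_pos h1]
          by_cases e1 : j.val + 1 = i.val
          · have ej1 : j = p1 := by rw [Fin.ext_iff, hp1v]; omega
            have ej2 : j ≠ i := by rw [Ne, Fin.ext_iff]; omega
            rw [if_pos e1, if_pos ej1, if_neg ej2]; ring
          · have ej1 : j ≠ p1 := by rw [Ne, Fin.ext_iff, hp1v]; omega
            rw [if_neg e1, if_neg ej1]
            by_cases e2 : j = i
            · rw [if_pos e2, if_pos e2]; simp
            · rw [if_neg e2, if_neg e2]; simp
        calc ∑ j, |B i j|
            = ∑ j, ((if j = p1 then |a (u - 1)| else 0)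
              + (if j = i then |1 + b (u - 1) - c (u - 1) * θ| else 0)) :=
              Finset.sum_congr rfl fun j _ => hrow j
          _ = |a (u - 1)| + |1 + b (u - 1) - c (u - 1) * θ| := by
              rw [Finset.sum_add_distrib, Finset.sum_ite_eq', Finset.sum_ite_eq']; simp
          _ ≤ 1 := by
              rw [abs_of_nonneg ha0, abs_of_nonneg hnn]
              have := habc (u - 1)
              nlinarith [mul_nonneg hc0 hθ0]
      · -- interior row
        have hiu : i.val < u := by have := i.isLt; omega
        obtain ⟨ha0, hc0⟩ := hcoef i.val (by omega) (by omega)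
        have hb0 : 0 ≤ 1 + b i.val := by
          have := (hint i.val (by omega) (by omega)).2
          rw [hb]; linarith
        let p1 : Fin (u + 1) := ⟨i.val - 1, by omega⟩
        let p3 : Fin (u + 1) := ⟨i.val + 1, by omega⟩
        have hp1v : p1.val = i.val - 1 := rfl
        have hp3v : p3.val = i.val + 1 := rfl
        have hrow : ∀ j, |B i j| =
            (if j = p1 then |a i.val| else 0)
            + (if j = i then |1 + b i.val| else 0)
            + (if j = p3 then |c i.val| else 0) := by
          intro j
          rw [hB, if_neg h0, if_neg hu', if_neg h1]
          by_cases e1 : j.val + 1 = i.val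
          · have ej1 : j = p1 := by rw [Fin.ext_iff, hp1v]; omega
            have ej2 : j ≠ i := by rw [Ne, Fin.ext_iff]; omega
            have ej3 : j ≠ p3 := by rw [Ne, Fin.ext_iff, hp3v]; omega
            rw [if_pos e1, if_pos ej1, if_neg ej2, if_neg ej3]; ring
          · have ej1 : j ≠ p1 := by rw [Ne, Fin.ext_iff, hp1v]; omega
            rw [if_neg e1, if_neg ej1]
            by_cases e2 : j = i
            · have ej3 : j ≠ p3 := by
                rw [Ne, Fin.ext_iff, hp3v]
                have := Fin.val_eq_of_eq e2
                omega
              rw [if_pos e2, if_pos e2, if_neg ej3]; ring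
            · rw [if_neg e2, if_neg e2]
              by_cases e3 : j.val = i.val + 1
              · have ej3 : j = p3 := by rw [Fin.ext_iff, hp3v]; omega
                rw [if_pos e3, if_pos ej3]; ring
              · have ej3 : j ≠ p3 := by rw [Ne, Fin.ext_iff, hp3v]; omega
                rw [if_neg e3, if_neg ej3]; simp
        calc ∑ j, |B i j|
            = ∑ j, ((if j = p1 then |a i.val| else 0)
              + (if j = i then |1 + b i.val| else 0)
              + (if j = p3 then |c i.val| else 0)) :=
              Finset.sum_congr rfl fun j _ => hrow j
          _ = |a i.val| + |1 + b i.val| + |c i.val| := by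
              rw [Finset.sum_add_distrib, Finset.sum_add_distrib,
                Finset.sum_ite_eq', Finset.sum_ite_eq', Finset.sum_ite_eq']; simp
          _ ≤ 1 := by
              rw [abs_of_nonneg ha0, abs_of_nonneg hb0, abs_of_nonneg hc0]
              have := habc i.val
              linarith
end

section
/- Assume r = q = 0. Then the ghost-point row stability condition |a| + |d| ≤ 1 holds if and only if δt ≤ 4δS²/(σ²S²(3 + θ)). (Here a = c = δt·σ²S²/(2δS²) and d = 1 − δt·σ²S²/δS² − c·θ.) -/
/-- with `r = q = 0`, the ghost-point row stability condition
`|a| + |d| ≤ 1` holds iff `δt ≤ 4δS²/(σ²S²(3 + θ))`. -/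
theorem ghost_row_stability_iff_rates_zero
    (δt δS σ r q S Lp ε θ a b c d : ℝ)
    (hδt : 0 < δt) (hδS : 0 < δS) (hσ : 0 < σ) (hS : 0 < S)
    (hr : r = 0) (hq : q = 0)
    (hL₁ : S < Lp) (hL₂ : Lp ≤ S + δS)
    (hε : ε = Lp - S) (hθ : θ = (δS - ε) / ε)
    (ha : a = δt * (σ ^ 2 * S ^ 2 / (2 * δS ^ 2) - (r - q) * S / (2 * δS)))
    (hb : b = -(δt * (r + σ ^ 2 * S ^ 2 / δS ^ 2)))
    (hc : c = δt * (σ ^ 2 * S ^ 2 / (2 * δS ^ 2) + (r - q) * S / (2 * δS)))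
    (hd : d = 1 + b - c * θ) :
    |a| + |d| ≤ 1 ↔ δt ≤ 4 * δS ^ 2 / (σ ^ 2 * S ^ 2 * (3 + θ)) := by
  subst hr hq hε
  have hεpos : 0 < Lp - S := by linarith
  have hθ0 : 0 ≤ θ := by
    rw [hθ]; exact div_nonneg (by linarith) hεpos.le
  have ha' : a = δt * (σ ^ 2 * S ^ 2 / (2 * δS ^ 2)) := by rw [ha]; ring
  have ha0 : 0 ≤ a := by rw [ha']; positivity
  have hca : c = a := by rw [hc, ha']; ring
  have hba : b = -(2 * a) := by
    rw [hb, ha']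
    field_simp
    ring
  have hd' : d = 1 - 2 * a - a * θ := by rw [hd, hca, hba]; ring
  have hk : a * (2 * δS ^ 2) = δt * (σ ^ 2 * S ^ 2) := by
    rw [ha']; field_simp
  have hpos : 0 < σ ^ 2 * S ^ 2 * (3 + θ) := by positivity
  have h2 : a * (3 + θ) * (2 * δS ^ 2) = δt * (σ ^ 2 * S ^ 2 * (3 + θ)) := by
    linear_combination (3 + θ) * hk
  have hδS2 : (0:ℝ) < 2 * δS ^ 2 := by positivity
  rw [abs_of_nonneg ha0, le_div_iff₀ hpos]
  constructor
  · intro h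
    have hdle : |d| ≤ 1 - a := by linarith
    have h3 := (abs_le.mp hdle).1
    rw [hd'] at h3
    have h1 : a * (3 + θ) ≤ 2 := by nlinarith
    calc δt * (σ ^ 2 * S ^ 2 * (3 + θ)) = a * (3 + θ) * (2 * δS ^ 2) := h2.symm
      _ ≤ 2 * (2 * δS ^ 2) := by
          exact mul_le_mul_of_nonneg_right h1 hδS2.le
      _ = 4 * δS ^ 2 := by ring
  · intro h
    have h1 : a * (3 + θ) ≤ 2 := by
      have : a * (3 + θ) * (2 * δS ^ 2) ≤ 2 * (2 * δS ^ 2) := by rw [h2]; linarith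
      exact le_of_mul_le_mul_right this hδS2
    have hdle : |d| ≤ 1 - a := by
      rw [hd', abs_le]
      constructor
      · nlinarith
      · nlinarith [mul_nonneg ha0 hθ0]
    linarith
end

section
/- Assume a ≥ 0, c ≥ 0 and r ≥ 0. Then d ≥ 0 if and only if δt(r + σ²S²/δS² + (σ²S²/(2δS²) + (r−q)S/(2δS))·θ) ≤ 1; moreover, whenever d ≥ 0 one has |a| + |d| = a + d = 1 − δt·r − c(1 + θ) ≤ 1, so the ghost-point row satisfies the sup-norm stability bound. -/
/-- with `a ≥ 0`, `c ≥ 0`, `r ≥ 0`: the modified diagonal entry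
`d` is nonnegative iff the ghost-point condition holds; and whenever `d ≥ 0`
one has `|a| + |d| = a + d = 1 − δt·r − c(1 + θ) ≤ 1`. -/
theorem ghost_row_nonneg_diag_stability
    (δt δS σ r q S Lp ε θ a b c d : ℝ)
    (hδt : 0 < δt) (hδS : 0 < δS) (hσ : 0 < σ) (hS : 0 < S)
    (hL₁ : S < Lp) (hL₂ : Lp ≤ S + δS)
    (hε : ε = Lp - S) (hθ : θ = (δS - ε) / ε)
    (ha : a = δt * (σ ^ 2 * S ^ 2 / (2 * δS ^ 2) - (r - q) * S / (2 * δS)))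
    (hb : b = -(δt * (r + σ ^ 2 * S ^ 2 / δS ^ 2)))
    (hc : c = δt * (σ ^ 2 * S ^ 2 / (2 * δS ^ 2) + (r - q) * S / (2 * δS)))
    (hd : d = 1 + b - c * θ)
    (ha0 : 0 ≤ a) (hc0 : 0 ≤ c) (hr : 0 ≤ r) :
    (0 ≤ d ↔ δt * (r + σ ^ 2 * S ^ 2 / δS ^ 2
        + (σ ^ 2 * S ^ 2 / (2 * δS ^ 2) + (r - q) * S / (2 * δS)) * θ) ≤ 1) ∧
    (0 ≤ d → |a| + |d| = a + d ∧ a + d = 1 - δt * r - c * (1 + θ) ∧ a + d ≤ 1) := by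
  have hε0 : 0 < ε := by rw [hε]; linarith
  have hθ0 : 0 ≤ θ := by
    rw [hθ]; apply div_nonneg _ hε0.le; rw [hε]; linarith
  have key : d = 1 - δt * (r + σ ^ 2 * S ^ 2 / δS ^ 2
      + (σ ^ 2 * S ^ 2 / (2 * δS ^ 2) + (r - q) * S / (2 * δS)) * θ) := by
    rw [hd, hb, hc]; ring
  have hsum : a + d = 1 - δt * r - c * (1 + θ) := by
    rw [hd, ha, hb, hc]; field_simp; ring
  refine ⟨by rw [key]; constructor <;> intro h <;> linarith, fun hd0 => ?_⟩
  refine ⟨by rw [abs_of_nonneg ha0, abs_of_nonneg hd0], hsum, ?_⟩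
  rw [hsum]
  nlinarith [mul_nonneg hc0 hθ0, mul_nonneg hδt.le hr]
end

section
/- Assume a ≥ 0, c ≥ 0 and r ≥ 0. Then: (i) if 1 + b ≥ 0, the interior row sum satisfies |a| + |1 + b| + |c| = 1 − δt·r ≤ 1; (ii) if 1 + b < 0, then |a| + |1 + b| + |c| ≤ 1 if and only if δt(r + 2σ²S²/δS²) ≤ 2. -/
/-- with `a ≥ 0`, `c ≥ 0`, `r ≥ 0`: (i) if `1 + b ≥ 0` the
interior row sum satisfies `|a| + |1 + b| + |c| = 1 − δt·r ≤ 1`; (ii) if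
`1 + b < 0` then `|a| + |1 + b| + |c| ≤ 1` iff `δt(r + 2σ²S²/δS²) ≤ 2`. -/
theorem interior_row_sum_cases
    (δt δS σ r q S a b c : ℝ)
    (hδt : 0 < δt) (hδS : 0 < δS) (hσ : 0 < σ) (hS : 0 < S)
    (ha : a = δt * (σ ^ 2 * S ^ 2 / (2 * δS ^ 2) - (r - q) * S / (2 * δS)))
    (hb : b = -(δt * (r + σ ^ 2 * S ^ 2 / δS ^ 2)))
    (hc : c = δt * (σ ^ 2 * S ^ 2 / (2 * δS ^ 2) + (r - q) * S / (2 * δS)))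
    (ha0 : 0 ≤ a) (hc0 : 0 ≤ c) (hr : 0 ≤ r) :
    (0 ≤ 1 + b → |a| + |1 + b| + |c| = 1 - δt * r ∧ 1 - δt * r ≤ 1) ∧
    (1 + b < 0 →
      (|a| + |1 + b| + |c| ≤ 1 ↔ δt * (r + 2 * σ ^ 2 * S ^ 2 / δS ^ 2) ≤ 2)) := by
  have hδS2 : δS ^ 2 ≠ 0 := by positivity
  constructor
  · intro h
    rw [abs_of_nonneg ha0, abs_of_nonneg hc0, abs_of_nonneg h]
    constructor
    · rw [ha, hb, hc]; field_simp; ring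
    · nlinarith
  · intro h
    rw [abs_of_nonneg ha0, abs_of_nonneg hc0, abs_of_neg h]
    have key : a + -(1 + b) + c = δt * (r + 2 * σ ^ 2 * S ^ 2 / δS ^ 2) - 1 := by
      rw [ha, hb, hc]; field_simp; ring
    rw [key]; constructor <;> intro <;> linarith
end
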